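/- Let 𝒞 be a cluster system on a nonempty finite set X, let FP be the fair proportion index on 𝒞, and let SV be the Shapley value. Then FP(ω) = SV(PD_ω) holds for all ω ∈ 𝕃(𝒞); equivalently, FP(ω) = SV(Σ_{C∈𝒞} ω(C)·g_C). -/

import Mathlib

open Finset

/-- The fair proportion index on a cluster system `𝒞` on `α`. -/
noncomputable def FPfun {α : Type*} [Fintype α] [DecidableEq α] (𝒞 : Finset (Finset α))
    (ω : ↥𝒞 → ℝ) (x : α) : ℝ :=
  ∑ C : ↥𝒞, if x ∈ C.1 then ω C / (C.1.card : ℝ) else 0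

/-- The game `g_C` associated with a nonempty subset `C ⊆ X`. -/
noncomputable def gC {α : Type*} [DecidableEq α] (C : Finset α) : Finset α → ℝ :=
  fun M => if (C ∩ M).Nonempty then 1 else 0

/-- The game `PD_ω` for a weighting `ω` of a cluster system `𝒞`:
`PD_ω(M) = ∑_{C ∈ 𝒞, M ∩ C ≠ ∅} ω(C)`. -/
noncomputable def PDgame {α : Type*} [DecidableEq α] (𝒞 : Finset (Finset α))
    (ω : ↥𝒞 → ℝ) (M : Finset α) : ℝ :=
  ∑ C : ↥𝒞, if (M ∩ C.1).Nonempty then ω C else 0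

/-- The Shapley value of a game `g : 𝒫(X) → ℝ`. -/
noncomputable def SV {α : Type*} [Fintype α] [DecidableEq α]
    (g : Finset α → ℝ) (x : α) : ℝ :=
  (1 / (Nat.factorial (Fintype.card α) : ℝ)) *
    ∑ M ∈ Finset.univ.filter (fun M : Finset α => x ∈ M),
      (Nat.factorial (M.card - 1) : ℝ) * (Nat.factorial (Fintype.card α - M.card) : ℝ) *
        (g M - g (M.erase x))

/-!
Both sides are linear in `ω` and `PD_ω = ∑_C ω(C) g_C`, so it suffices to show that the Shapley
value of `g_C` is `1/|C|` on `C` and `0` off `C`. A player outside `C` never changes `g_C`. A player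
`x ∈ C` is pivotal exactly for the coalitions `S ∌ x` disjoint from `C`; grouping these by size, the
Shapley weights `|S|! (n - 1 - |S|)!` add up to `n!/|C|` by the hockey-stick identity.
-/

open Nat

theorem Nat.sum_range_choose_mul_factorial_mul_factorial (m c : ℕ) :
    (∑ k ∈ range (m + 1), m.choose k * (k ! * (m + c - k)!)) * (c + 1) = (m + c + 1)! := by
  have hterm : ∀ k ∈ range (m + 1),
      m.choose k * (k ! * (m + c - k)!) = m ! * c ! * (m - k + c).choose c := by
    intro k hk
    have hkm : k ≤ m := Nat.lt_succ_iff.mp (mem_range.mp hk)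
    rw [show m + c - k = m - k + c by omega, ← add_choose_mul_factorial_mul_factorial (m - k) c,
      ← choose_mul_factorial_mul_factorial hkm]
    ring
  have hockey : ∑ k ∈ range (m + 1), (m - k + c).choose c = (m + c + 1).choose (c + 1) := by
    rw [← sum_range_add_choose, ← sum_range_reflect (fun i => (i + c).choose c),
      add_tsub_cancel_right]
  rw [sum_congr rfl hterm, ← mul_sum, hockey, add_assoc m c 1,
    ← add_choose_mul_factorial_mul_factorial m (c + 1), factorial_succ]
  ring

section Shapley

variable {α : Type*} [Fintype α] [DecidableEq α]

theorem Finset.sum_filter_mem_eq_sum_powerset_erase {β : Type*} [AddCommMonoid β] (x : α)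
    (f : Finset α → β) :
    ∑ M ∈ univ.filter (x ∈ ·), f M = ∑ S ∈ (univ.erase x).powerset, f (insert x S) := by
  rw [sum_filter, ← powerset_univ]
  conv_lhs => rw [← insert_erase (mem_univ x), sum_powerset_insert (notMem_erase x univ)]
  simp only [mem_insert_self, if_true]
  rw [sum_eq_zero fun S hS => if_neg fun hx => notMem_erase x univ (mem_powerset.mp hS hx),
    zero_add]

theorem SV_eq_sum_powerset_erase (g : Finset α → ℝ) (x : α) :
    SV g x = 1 / (Fintype.card α)! * ∑ S ∈ (univ.erase x).powerset,
      ((#S)! * (Fintype.card α - (#S + 1))! : ℝ) * (g (insert x S) - g S) := by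
  rw [SV, sum_filter_mem_eq_sum_powerset_erase]
  refine congrArg _ (sum_congr rfl fun S hS => ?_)
  have hxS : x ∉ S := fun h => notMem_erase x univ (mem_powerset.mp hS h)
  rw [card_insert_of_notMem hxS, erase_insert hxS, add_tsub_cancel_right]

theorem SV_sum {ι : Type*} (s : Finset ι) (g : ι → Finset α → ℝ) (x : α) :
    SV (fun M => ∑ i ∈ s, g i M) x = ∑ i ∈ s, SV (g i) x := by
  simp only [SV, ← sum_sub_distrib, mul_sum]
  exact sum_comm

theorem SV_const_mul (a : ℝ) (g : Finset α → ℝ) (x : α) :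
    SV (fun M => a * g M) x = a * SV g x := by
  simp only [SV, mul_sum]
  refine sum_congr rfl fun M _ => ?_
  ring

end Shapley

section ClusterGames

variable {α : Type*} [DecidableEq α]

theorem gC_insert_of_notMem {C : Finset α} {x : α} (hx : x ∉ C) (S : Finset α) :
    gC C (insert x S) = gC C S := by
  rw [gC, gC, inter_insert_of_notMem hx]

theorem gC_insert_sub_gC_of_mem {C : Finset α} {x : α} (hx : x ∈ C) (S : Finset α) :
    gC C (insert x S) - gC C S = if Disjoint C S then 1 else 0 := by
  have hins : (C ∩ insert x S).Nonempty := ⟨x, mem_inter.mpr ⟨hx, mem_insert_self x S⟩⟩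
  rw [gC, gC, if_pos hins]
  by_cases hCS : Disjoint C S
  · rw [if_pos hCS, if_neg (not_nonempty_iff_eq_empty.mpr (disjoint_iff_inter_eq_empty.mp hCS)),
      sub_zero]
  · rw [if_neg hCS, if_pos (not_disjoint_iff_nonempty_inter.mp hCS), sub_self]

theorem PDgame_eq_sum_mul_gC (𝒞 : Finset (Finset α)) (ω : ↥𝒞 → ℝ) :
    PDgame 𝒞 ω = fun M => ∑ C : ↥𝒞, ω C * gC C.1 M := by
  funext M
  refine sum_congr rfl fun C _ => ?_
  rw [gC, inter_comm, mul_ite, mul_one, mul_zero]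

variable [Fintype α]

theorem SV_gC_of_notMem {C : Finset α} {x : α} (hx : x ∉ C) : SV (gC C) x = 0 := by
  simp [SV_eq_sum_powerset_erase, gC_insert_of_notMem hx]

theorem SV_gC_of_mem {C : Finset α} {x : α} (hx : x ∈ C) : SV (gC C) x = 1 / #C := by
  have hpivotal : (univ.erase x).powerset.filter (Disjoint C) = Cᶜ.powerset := by
    ext S
    simp only [mem_filter, mem_powerset, subset_compl_iff_disjoint_left]
    exact and_iff_right_of_imp fun h y hy =>
      mem_erase.mpr ⟨fun hyx => disjoint_left.mp h (hyx ▸ hx) hy, mem_univ y⟩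
  obtain ⟨c, hc⟩ : ∃ c, #C = c + 1 := Nat.exists_eq_add_one.mpr (card_pos.mpr ⟨x, hx⟩)
  have hcard : Fintype.card α = #Cᶜ + c + 1 := by
    rw [card_compl, add_assoc, ← hc, Nat.sub_add_cancel (card_le_univ C)]
  rw [SV_eq_sum_powerset_erase]
  simp only [gC_insert_sub_gC_of_mem hx, mul_ite, mul_one, mul_zero]
  rw [← sum_filter, hpivotal, hcard, hc,
    sum_powerset_apply_card (fun k => ((k ! : ℝ) * (#Cᶜ + c + 1 - (k + 1))!))]
  generalize #Cᶜ = m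
  have key : (∑ k ∈ range (m + 1), (m.choose k : ℝ) * (k ! * (m + c - k)!)) * (c + 1)
      = (m + c + 1)! := by
    exact_mod_cast Nat.sum_range_choose_mul_factorial_mul_factorial m c
  simp only [nsmul_eq_mul, Nat.add_sub_add_right]
  push_cast
  generalize (∑ k ∈ range (m + 1), (m.choose k : ℝ) * (k ! * (m + c - k)!)) = s at key ⊢
  have hs : s ≠ 0 := left_ne_zero_of_mul (key ▸ (Nat.cast_ne_zero.mpr (factorial_ne_zero _)))
  rw [← key]
  field_simp

end ClusterGames

theorem FPfun_eq_SV_sum_mul_gC {α : Type*} [Fintype α] [DecidableEq α] (𝒞 : Finset (Finset α))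
    (ω : ↥𝒞 → ℝ) : FPfun 𝒞 ω = SV (fun M => ∑ C : ↥𝒞, ω C * gC C.1 M) := by
  funext x
  rw [SV_sum]
  refine sum_congr rfl fun C _ => ?_
  rw [SV_const_mul]
  by_cases hx : x ∈ C.1
  · rw [if_pos hx, SV_gC_of_mem hx, mul_one_div]
  · rw [if_neg hx, SV_gC_of_notMem hx, mul_zero]

theorem stmt8_general {α : Type*} [Fintype α] [DecidableEq α]
    (𝒞 : Finset (Finset α)) :
    ∀ ω : ↥𝒞 → ℝ,
      FPfun 𝒞 ω = SV (PDgame 𝒞 ω)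
      ∧ FPfun 𝒞 ω = SV (fun M => ∑ C : ↥𝒞, ω C * gC C.1 M) := by
  intro ω
  exact ⟨PDgame_eq_sum_mul_gC 𝒞 ω ▸ FPfun_eq_SV_sum_mul_gC 𝒞 ω, FPfun_eq_SV_sum_mul_gC 𝒞 ω⟩

/-- The fair proportion index coincides with the Shapley value of the game `PD_ω`;
equivalently, `FP(ω) = SV(∑_{C ∈ 𝒞} ω(C) · g_C)`. -/
theorem stmt8 {α : Type*} [Fintype α] [DecidableEq α] [Nonempty α]
    (𝒞 : Finset (Finset α)) (h𝒞 : 𝒞.Nonempty) (h𝒞' : ∀ C ∈ 𝒞, C.Nonempty) :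
    ∀ ω : ↥𝒞 → ℝ,
      FPfun 𝒞 ω = SV (PDgame 𝒞 ω)
      ∧ FPfun 𝒞 ω = SV (fun M => ∑ C : ↥𝒞, ω C * gC C.1 M) :=
  stmt8_general 𝒞
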